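/- arXiv:1606.01848 — 5 statements merged into one kernel-verified Lean document; each statement's English description precedes it below -/
import Mathlib

section
/- For finite simple graphs G₁ and G₂, the fractional chromatic number of their join satisfies χ_f(G₁ + G₂) = χ_f(G₁) + χ_f(G₂). -/
open Module

/-- An orthogonal representation (OR) of a simple graph `G` in `ℂ^d`: an injective map from the
vertices of `G` to one-dimensional subspaces of `ℂ^d` such that adjacent vertices are mapped to
orthogonal subspaces. -/
def IsOrthRep {V : Type*} (G : SimpleGraph V) (d : ℕ)
    (φ : V → Submodule ℂ (EuclideanSpace ℂ (Fin d))) : Prop :=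
  Function.Injective φ ∧ (∀ v, Module.finrank ℂ (φ v) = 1) ∧
    ∀ u v : V, G.Adj u v → φ u ≤ (φ v)ᗮ

/-- A faithful orthogonal representation (FOR) of a simple graph `G` in `ℂ^d`: an injective map
from the vertices of `G` to one-dimensional subspaces of `ℂ^d` such that two distinct vertices
are adjacent if and only if their images are orthogonal subspaces. -/
def IsFaithfulOrthRep {V : Type*} (G : SimpleGraph V) (d : ℕ)
    (φ : V → Submodule ℂ (EuclideanSpace ℂ (Fin d))) : Prop :=
  Function.Injective φ ∧ (∀ v, Module.finrank ℂ (φ v) = 1) ∧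
    ∀ u v : V, u ≠ v → (G.Adj u v ↔ φ u ≤ (φ v)ᗮ)

/-- `G` admits an orthogonal representation in `ℂ^d`. -/
def HasOR {V : Type*} (G : SimpleGraph V) (d : ℕ) : Prop := ∃ φ, IsOrthRep G d φ

/-- `G` admits a faithful orthogonal representation in `ℂ^d`. -/
def HasFOR {V : Type*} (G : SimpleGraph V) (d : ℕ) : Prop := ∃ φ, IsFaithfulOrthRep G d φ

/-- `ξ(G)`: the smallest dimension `d` such that `G` admits an orthogonal representation
in `ℂ^d`. -/
noncomputable def xi {V : Type*} (G : SimpleGraph V) : ℕ := sInf {d | HasOR G d}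

/-- `Ξ(G)`: the smallest dimension `d` such that `G` admits a faithful orthogonal representation
in `ℂ^d`. -/
noncomputable def Xi {V : Type*} (G : SimpleGraph V) : ℕ := sInf {d | HasFOR G d}

/-- A `b`-fold coloring of `G` with `a` colors: each vertex receives a set of `b` colors out of
`a` colors such that adjacent vertices receive disjoint sets. -/
def HasFoldColoring {V : Type*} (G : SimpleGraph V) (a b : ℕ) : Prop :=
  ∃ c : V → Finset (Fin a), (∀ v, (c v).card = b) ∧
    ∀ u v : V, G.Adj u v → Disjoint (c u) (c v)

/-- The fractional chromatic number `χ_f(G)`: the infimum of `a / b` over all `b`-fold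
colorings of `G` with `a` colors. -/
noncomputable def fracChrom {V : Type*} (G : SimpleGraph V) : ℝ :=
  sInf {x : ℝ | ∃ a b : ℕ, 0 < b ∧ HasFoldColoring G a b ∧ x = (a : ℝ) / b}

/-- The join `G₁ + G₂` of two graphs: their disjoint union together with one additional edge
between every pair of vertices taken one from each graph. -/
def graphJoin {V₁ V₂ : Type*} (G₁ : SimpleGraph V₁) (G₂ : SimpleGraph V₂) :
    SimpleGraph (V₁ ⊕ V₂) :=
  (G₁ ⊕g G₂) ⊔ completeBipartiteGraph V₁ V₂

/-!
A `b`-fold coloring of `G₁ + G₂` uses disjoint palettes on the two sides, so it restricts to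
`b`-fold colorings of `G₁` and `G₂` whose numbers of colors add up to at most `a`; this gives
`χ_f(G₁) + χ_f(G₂) ≤ χ_f(G₁ + G₂)`. Conversely, blowing up an `a₁/b₁` coloring of `G₁` and an
`a₂/b₂` coloring of `G₂` to `b₁b₂`-fold colorings and placing them on disjoint palettes colors
the join with `a₁b₂ + a₂b₁` colors.
-/

open Finset

section FoldColoring

variable {V α β : Type*} {G : SimpleGraph V}

def IsFoldColoring (G : SimpleGraph V) (b : ℕ) (c : V → Finset α) : Prop :=
  (∀ v, (c v).card = b) ∧ ∀ u v, G.Adj u v → Disjoint (c u) (c v)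

theorem hasFoldColoring_iff {a b : ℕ} :
    HasFoldColoring G a b ↔ ∃ c : V → Finset (Fin a), IsFoldColoring G b c :=
  Iff.rfl

namespace IsFoldColoring

variable {b : ℕ} {c : V → Finset α}

theorem hasFoldColoring [Fintype α] (h : IsFoldColoring G b c) :
    HasFoldColoring G (Fintype.card α) b :=
  ⟨fun v => (c v).map (Fintype.equivFin α).toEmbedding, fun v => by simpa using h.1 v,
    fun u v huv => by simpa using h.2 u v huv⟩

theorem subtype_of_subset [DecidableEq α] (h : IsFoldColoring G b c) {T : Finset α}
    (hT : ∀ v, c v ⊆ T) : IsFoldColoring G b fun v => (c v).subtype (· ∈ T) := by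
  refine ⟨fun v => ?_, fun u v huv => ?_⟩
  · rw [card_subtype, filter_true_of_mem (hT v), h.1 v]
  · exact disjoint_left.mpr fun x hu hv =>
      disjoint_left.mp (h.2 u v huv) (mem_subtype.mp hu) (mem_subtype.mp hv)

theorem product_univ [Fintype β] (h : IsFoldColoring G b c) :
    IsFoldColoring G (b * Fintype.card β) fun v => c v ×ˢ (univ : Finset β) :=
  ⟨fun v => by rw [card_product, h.1 v, card_univ],
    fun u v huv => disjoint_product.mpr (Or.inl (h.2 u v huv))⟩

end IsFoldColoring

theorem hasFoldColoring_card [Fintype V] (G : SimpleGraph V) :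
    HasFoldColoring G (Fintype.card V) 1 :=
  IsFoldColoring.hasFoldColoring (c := fun v : V => ({v} : Finset V))
    ⟨fun _ => card_singleton _, fun _ _ huv => disjoint_singleton.mpr huv.ne⟩

theorem HasFoldColoring.mul {a b : ℕ} (h : HasFoldColoring G a b) (k : ℕ) :
    HasFoldColoring G (a * k) (b * k) := by
  obtain ⟨c, hc⟩ := hasFoldColoring_iff.mp h
  simpa using (hc.product_univ (β := Fin k)).hasFoldColoring

end FoldColoring

section FracChrom

variable {V : Type*} {G : SimpleGraph V}

theorem fracChrom_le_div {a b : ℕ} (hb : 0 < b) (h : HasFoldColoring G a b) :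
    fracChrom G ≤ (a : ℝ) / b :=
  csInf_le ⟨0, by rintro x ⟨a, b, -, -, rfl⟩; positivity⟩ ⟨a, b, hb, h, rfl⟩

theorem le_fracChrom [Fintype V] {r : ℝ}
    (h : ∀ a b : ℕ, 0 < b → HasFoldColoring G a b → r ≤ (a : ℝ) / b) : r ≤ fracChrom G :=
  le_csInf ⟨_, _, 1, one_pos, hasFoldColoring_card G, rfl⟩ <| by
    rintro x ⟨a, b, hb, hab, rfl⟩
    exact h a b hb hab

end FracChrom

section GraphJoin

variable {V₁ V₂ : Type*} {G₁ : SimpleGraph V₁} {G₂ : SimpleGraph V₂}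

@[simp]
theorem graphJoin_adj_inl_inl {u v : V₁} :
    (graphJoin G₁ G₂).Adj (.inl u) (.inl v) ↔ G₁.Adj u v := by
  simp [graphJoin]

@[simp]
theorem graphJoin_adj_inr_inr {u v : V₂} :
    (graphJoin G₁ G₂).Adj (.inr u) (.inr v) ↔ G₂.Adj u v := by
  simp [graphJoin]

theorem graphJoin_adj_inl_inr (u : V₁) (v : V₂) :
    (graphJoin G₁ G₂).Adj (.inl u) (.inr v) := by
  simp [graphJoin]

theorem hasFoldColoring_graphJoin {a₁ a₂ b : ℕ} (h₁ : HasFoldColoring G₁ a₁ b)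
    (h₂ : HasFoldColoring G₂ a₂ b) : HasFoldColoring (graphJoin G₁ G₂) (a₁ + a₂) b := by
  obtain ⟨c₁, hc₁⟩ := hasFoldColoring_iff.mp h₁
  obtain ⟨c₂, hc₂⟩ := hasFoldColoring_iff.mp h₂
  have hc : IsFoldColoring (graphJoin G₁ G₂) b
      (Sum.elim (fun v => (c₁ v).map .inl) (fun v => (c₂ v).map .inr)) := by
    refine ⟨by rintro (v | v) <;> simp [hc₁.1, hc₂.1], ?_⟩
    rintro (u | u) (v | v) huv
    · simpa using hc₁.2 u v (graphJoin_adj_inl_inl.mp huv)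
    · exact disjoint_map_inl_map_inr _ _
    · exact (disjoint_map_inl_map_inr _ _).symm
    · simpa using hc₂.2 u v (graphJoin_adj_inr_inr.mp huv)
  simpa using hc.hasFoldColoring

theorem exists_add_le_of_hasFoldColoring_graphJoin {a b : ℕ}
    (h : HasFoldColoring (graphJoin G₁ G₂) a b) :
    ∃ a₁ a₂, a₁ + a₂ ≤ a ∧ HasFoldColoring G₁ a₁ b ∧ HasFoldColoring G₂ a₂ b := by
  classical
  obtain ⟨c, hc⟩ := hasFoldColoring_iff.mp h
  let T₁ : Finset (Fin a) := univ.filter fun x => ∃ v, x ∈ c (.inl v)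
  let T₂ : Finset (Fin a) := univ.filter fun x => ∃ v, x ∈ c (.inr v)
  have hT : Disjoint T₁ T₂ := disjoint_left.mpr fun x hx₁ hx₂ => by
    obtain ⟨u, hu⟩ := (mem_filter.mp hx₁).2
    obtain ⟨v, hv⟩ := (mem_filter.mp hx₂).2
    exact disjoint_left.mp (hc.2 _ _ (graphJoin_adj_inl_inr u v)) hu hv
  have hc₁ : IsFoldColoring G₁ b (c ∘ .inl) :=
    ⟨fun v => hc.1 _, fun u v huv => hc.2 _ _ (graphJoin_adj_inl_inl.mpr huv)⟩
  have hc₂ : IsFoldColoring G₂ b (c ∘ .inr) :=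
    ⟨fun v => hc.1 _, fun u v huv => hc.2 _ _ (graphJoin_adj_inr_inr.mpr huv)⟩
  refine ⟨T₁.card, T₂.card, ?_, ?_, ?_⟩
  · simpa [card_union_of_disjoint hT] using card_le_univ (T₁ ∪ T₂)
  · simpa using (hc₁.subtype_of_subset (T := T₁) fun v x hx => mem_filter.mpr
      ⟨mem_univ x, v, hx⟩).hasFoldColoring
  · simpa using (hc₂.subtype_of_subset (T := T₂) fun v x hx => mem_filter.mpr
      ⟨mem_univ x, v, hx⟩).hasFoldColoring

theorem fracChrom_graphJoin_le_div_add_div {a₁ b₁ a₂ b₂ : ℕ} (hb₁ : 0 < b₁) (hb₂ : 0 < b₂)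
    (h₁ : HasFoldColoring G₁ a₁ b₁) (h₂ : HasFoldColoring G₂ a₂ b₂) :
    fracChrom (graphJoin G₁ G₂) ≤ (a₁ : ℝ) / b₁ + (a₂ : ℝ) / b₂ := by
  have h := hasFoldColoring_graphJoin (h₁.mul b₂) (mul_comm b₂ b₁ ▸ h₂.mul b₁)
  calc fracChrom (graphJoin G₁ G₂)
      ≤ ((a₁ * b₂ + a₂ * b₁ : ℕ) : ℝ) / (b₁ * b₂ : ℕ) := fracChrom_le_div (by positivity) h
    _ = (a₁ : ℝ) / b₁ + (a₂ : ℝ) / b₂ := by push_cast; field_simp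

theorem fracChrom_add_fracChrom_le_div {a b : ℕ} (hb : 0 < b)
    (h : HasFoldColoring (graphJoin G₁ G₂) a b) :
    fracChrom G₁ + fracChrom G₂ ≤ (a : ℝ) / b := by
  obtain ⟨a₁, a₂, ha, h₁, h₂⟩ := exists_add_le_of_hasFoldColoring_graphJoin h
  calc fracChrom G₁ + fracChrom G₂ ≤ (a₁ : ℝ) / b + (a₂ : ℝ) / b :=
        add_le_add (fracChrom_le_div hb h₁) (fracChrom_le_div hb h₂)
    _ = ((a₁ + a₂ : ℕ) : ℝ) / b := by push_cast; ring
    _ ≤ (a : ℝ) / b := by gcongr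

end GraphJoin

/-- For finite simple graphs `G₁` and `G₂`,
`χ_f(G₁ + G₂) = χ_f(G₁) + χ_f(G₂)`. -/
theorem stmt5 {V₁ V₂ : Type*} [Fintype V₁] [Fintype V₂]
    (G₁ : SimpleGraph V₁) (G₂ : SimpleGraph V₂) :
    fracChrom (graphJoin G₁ G₂) = fracChrom G₁ + fracChrom G₂ := by
  refine le_antisymm ?_ (le_fracChrom fun a b hb h => fracChrom_add_fracChrom_le_div hb h)
  suffices ∀ a₂ b₂ : ℕ, 0 < b₂ → HasFoldColoring G₂ a₂ b₂ →
      fracChrom (graphJoin G₁ G₂) - fracChrom G₁ ≤ (a₂ : ℝ) / b₂ by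
    linarith [le_fracChrom this]
  intro a₂ b₂ hb₂ h₂
  suffices fracChrom (graphJoin G₁ G₂) - (a₂ : ℝ) / b₂ ≤ fracChrom G₁ by linarith
  refine le_fracChrom fun a₁ b₁ hb₁ h₁ => ?_
  linarith [fracChrom_graphJoin_le_div_add_div hb₁ hb₂ h₁ h₂]
end

section
/- For finite nonempty simple graphs G₁ and G₂ with at least one of them having more than one vertex, the smallest dimension admitting a faithful orthogonal representation of their disjoint union satisfies Ξ(G₁ ∪ G₂) = max(Ξ(G₁), Ξ(G₂)). -/
open Module

/-! The lower bound is restriction. For the upper bound, take FORs `x` of `G₁` and `y` of `G₂`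
in the same space `ℂ^d`, `d ≥ 2`, and move `y` by a unitary `U` into general position with
respect to `x`: every `⟪x u, U (y w)⟫` must be nonzero (no spurious edges), and `U (y w)` must
never span the line of `x u`, which is forced by also requiring `⟪z u, U (y w)⟫ ≠ 0` for a
nonzero `z u ⊥ x u`. Rotating by a phase `ζ` along a unit vector `h` with `⟪a, h⟫ ≠ 0 ≠ ⟪h, b⟫`
for all these vectors makes each such inner product an affine function of `ζ` with nonzero
slope, so all but finitely many `ζ` on the unit circle work. -/

open scoped InnerProductSpace

section InnerProductSpace

theorem span_singleton_le_orthogonal_iff {𝕜 E : Type*} [RCLike 𝕜] [NormedAddCommGroup E]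
    [InnerProductSpace 𝕜 E] {a b : E} : (𝕜 ∙ a) ≤ (𝕜 ∙ b)ᗮ ↔ ⟪a, b⟫_𝕜 = 0 := by
  rw [← Submodule.isOrtho_iff_le, Submodule.isOrtho_span]
  simp

theorem exists_eq_span_singleton_of_finrank_eq_one {K E : Type*} [DivisionRing K]
    [AddCommGroup E] [Module K E] {p : Submodule K E} (hp : finrank K p = 1) :
    ∃ a : E, a ≠ 0 ∧ p = K ∙ a := by
  obtain ⟨a, ha, ha0⟩ := (Submodule.ne_bot_iff p).mp fun h => by
    rw [h, finrank_bot] at hp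
    exact zero_ne_one hp
  have : FiniteDimensional K p := Module.finite_of_finrank_eq_succ hp
  refine ⟨a, ha0, (Submodule.eq_of_le_of_finrank_le ?_ ?_).symm⟩
  · exact (Submodule.span_singleton_le_iff_mem a p).mpr ha
  · rw [hp, finrank_span_singleton ha0]

theorem exists_ne_zero_inner_eq_zero {𝕜 E : Type*} [RCLike 𝕜] [NormedAddCommGroup E]
    [InnerProductSpace 𝕜 E] [FiniteDimensional 𝕜 E] (hE : 2 ≤ finrank 𝕜 E) (a : E) :
    ∃ z : E, z ≠ 0 ∧ ⟪z, a⟫_𝕜 = 0 := by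
  have hK : (𝕜 ∙ a)ᗮ ≠ ⊥ := by
    intro hbot
    have hsum := Submodule.finrank_add_finrank_orthogonal (𝕜 ∙ a)
    have hspan := finrank_span_le_card (R := 𝕜) ({a} : Set E)
    rw [hbot, finrank_bot, add_zero] at hsum
    simp only [Set.toFinset_singleton, Finset.card_singleton] at hspan
    omega
  obtain ⟨z, hz, hz0⟩ := (Submodule.ne_bot_iff _).mp hK
  exact ⟨z, hz0, Submodule.mem_orthogonal_singleton_iff_inner_left.mp hz⟩

theorem exists_forall_inner_ne_zero {𝕜 E ι : Type*} [RCLike 𝕜] [NormedAddCommGroup E]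
    [InnerProductSpace 𝕜 E] [Finite ι] {c : ι → E} (hc : ∀ i, c i ≠ 0) :
    ∃ h : E, ∀ i, ⟪c i, h⟫_𝕜 ≠ 0 := by
  by_contra! hcover
  obtain ⟨i, hi⟩ := Subspace.exists_eq_top_of_iUnion_eq_univ (p := fun i => (𝕜 ∙ c i)ᗮ) <| by
    ext h
    simpa [Submodule.mem_orthogonal_singleton_iff_inner_right] using hcover h
  have : c i ∈ (𝕜 ∙ c i)ᗮ := hi ▸ Submodule.mem_top
  exact hc i (inner_self_eq_zero.mp (Submodule.mem_orthogonal_singleton_iff_inner_right.mp this))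

theorem exists_linearIsometry_of_finrank_le {𝕜 E F : Type*} [RCLike 𝕜]
    [NormedAddCommGroup E] [InnerProductSpace 𝕜 E] [FiniteDimensional 𝕜 E]
    [NormedAddCommGroup F] [InnerProductSpace 𝕜 F] [FiniteDimensional 𝕜 F]
    (h : finrank 𝕜 E ≤ finrank 𝕜 F) : Nonempty (E →ₗᵢ[𝕜] F) := by
  let b := (stdOrthonormalBasis 𝕜 E).toBasis
  let c : Fin (finrank 𝕜 E) → F := stdOrthonormalBasis 𝕜 F ∘ Fin.castLE h
  have hc : Orthonormal 𝕜 c :=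
    (stdOrthonormalBasis 𝕜 F).orthonormal.comp _ (Fin.castLE_injective h)
  refine ⟨(b.constr 𝕜 c).isometryOfOrthonormal (v := b) ?_ ?_⟩
  · simp [b]
  · convert hc
    ext i
    simp [b]

theorem inner_toLp_indicator {ι : Type*} [Fintype ι] [DecidableEq ι] (s t : Finset ι) :
    ⟪WithLp.toLp 2 (fun i => if i ∈ s then (1 : ℂ) else 0),
      (WithLp.toLp 2 (fun i => if i ∈ t then (1 : ℂ) else 0) : EuclideanSpace ℂ ι)⟫_ℂ =
      (s ∩ t).card := by
  simp [PiLp.inner_apply, ← ite_and, Finset.sum_boole, Finset.filter_and]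

theorem Complex.setOf_norm_eq_one_infinite : {ζ : ℂ | ‖ζ‖ = 1}.Infinite := by
  have hinj : Set.InjOn (fun t : ℝ => (Circle.exp t : ℂ)) (Set.Icc 0 1) :=
    Subtype.coe_injective.comp_injOn (Circle.exp_injOn_Icc (by linarith [Real.pi_gt_three]))
  refine ((Set.Icc_infinite zero_lt_one).image hinj).mono ?_
  rintro _ ⟨t, -, rfl⟩
  exact Circle.norm_coe _

variable {E : Type*} [NormedAddCommGroup E] [InnerProductSpace ℂ E]

/-- `U` fixes `(ℂ ∙ h)ᗮ` pointwise and multiplies `h` by `ζ`. -/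
theorem exists_linearIsometry_inner_eq {h : E} (hh : ‖h‖ = 1) {ζ : ℂ} (hζ : ‖ζ‖ = 1) :
    ∃ U : E →ₗᵢ[ℂ] E, ∀ a b, ⟪a, U b⟫_ℂ = ⟪a, b⟫_ℂ + (ζ - 1) * ⟪a, h⟫_ℂ * ⟪h, b⟫_ℂ := by
  let L : E →ₗ[ℂ] E := LinearMap.id + (ζ - 1) • (innerₛₗ ℂ h).smulRight h
  have hL : ∀ b, L b = b + ((ζ - 1) * ⟪h, b⟫_ℂ) • h := fun b => by
    simp [L, mul_smul]
  have hconj : (starRingEnd ℂ) ζ * ζ = 1 := by rw [Complex.conj_mul', hζ]; norm_num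
  have hhh : ⟪h, h⟫_ℂ = 1 := by rw [inner_self_eq_norm_sq_to_K, hh]; norm_num
  refine ⟨L.isometryOfInner fun a b => ?_, fun a b => ?_⟩
  · simp only [hL, inner_add_left, inner_add_right, inner_smul_left, inner_smul_right, hhh,
      ← inner_conj_symm a h, map_mul, map_sub, map_one]
    linear_combination (starRingEnd ℂ) ⟪h, a⟫_ℂ * ⟪h, b⟫_ℂ * hconj
  · rw [LinearMap.coe_isometryOfInner, hL, inner_add_right, inner_smul_right]
    ring

theorem exists_linearIsometry_forall_inner_ne_zero {ι κ : Type*} [Finite ι] [Finite κ]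
    {a : ι → E} {b : κ → E} (ha : ∀ i, a i ≠ 0) (hb : ∀ k, b k ≠ 0) :
    ∃ U : E →ₗᵢ[ℂ] E, ∀ i k, ⟪a i, U (b k)⟫_ℂ ≠ 0 := by
  rcases isEmpty_or_nonempty ι with hι | ⟨⟨i₀⟩⟩
  · exact ⟨LinearIsometry.id, fun i => isEmptyElim i⟩
  obtain ⟨h₀, hh₀⟩ := exists_forall_inner_ne_zero (𝕜 := ℂ) (c := Sum.elim a b)
    (by rintro (i | k); exacts [ha i, hb k])
  have h₀_ne : h₀ ≠ 0 := by rintro rfl; exact hh₀ (.inl i₀) (inner_zero_right _)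
  obtain ⟨h, hh, hah, hhb⟩ : ∃ h : E, ‖h‖ = 1 ∧ (∀ i, ⟪a i, h⟫_ℂ ≠ 0) ∧ ∀ k, ⟪h, b k⟫_ℂ ≠ 0 := by
    refine ⟨(‖h₀‖⁻¹ : ℂ) • h₀, norm_smul_inv_norm h₀_ne, fun i => ?_, fun k => ?_⟩
    · simpa [inner_smul_right, h₀_ne] using hh₀ (.inl i)
    · rw [inner_smul_left]
      exact mul_ne_zero (by simpa using h₀_ne) fun hk => hh₀ (.inr k) (inner_eq_zero_symm.mp hk)
  -- the only phase `ζ` for which `⟪a i, U (b k)⟫` vanishes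
  let bad : ι × κ → ℂ := fun p => 1 - ⟪a p.1, b p.2⟫_ℂ / (⟪a p.1, h⟫_ℂ * ⟪h, b p.2⟫_ℂ)
  obtain ⟨ζ, hζ, hζbad⟩ :=
    Complex.setOf_norm_eq_one_infinite.exists_notMem_finite (Set.finite_range bad)
  obtain ⟨U, hU⟩ := exists_linearIsometry_inner_eq hh hζ
  refine ⟨U, fun i k hzero => hζbad ⟨(i, k), ?_⟩⟩
  rw [hU] at hzero
  have := hah i
  have := hhb k
  simp only [bad]
  field_simp
  linear_combination -hzero

end InnerProductSpace

section VecRep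

variable {V E F : Type*} [NormedAddCommGroup E] [InnerProductSpace ℂ E]
  [NormedAddCommGroup F] [InnerProductSpace ℂ F]

/-- A faithful orthogonal representation given by vectors rather than by the lines they span. -/
structure IsFaithfulOrthVecRep (G : SimpleGraph V) (x : V → E) : Prop where
  ne_zero : ∀ v, x v ≠ 0
  span_injective : Function.Injective fun v => ℂ ∙ x v
  adj_iff : ∀ u v, u ≠ v → (G.Adj u v ↔ ⟪x u, x v⟫_ℂ = 0)

theorem hasFOR_iff_exists_isFaithfulOrthVecRep {G : SimpleGraph V} {d : ℕ} :
    HasFOR G d ↔ ∃ x : V → EuclideanSpace ℂ (Fin d), IsFaithfulOrthVecRep G x := by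
  constructor
  · rintro ⟨φ, hinj, hrank, hadj⟩
    choose x hx0 hφ using fun v => exists_eq_span_singleton_of_finrank_eq_one (hrank v)
    obtain rfl : φ = fun v => ℂ ∙ x v := funext hφ
    exact ⟨x, hx0, hinj, fun u v huv => (hadj u v huv).trans span_singleton_le_orthogonal_iff⟩
  · rintro ⟨x, hx0, hinj, hadj⟩
    exact ⟨fun v => ℂ ∙ x v, hinj, fun v => finrank_span_singleton (hx0 v),
      fun u v huv => (hadj u v huv).trans span_singleton_le_orthogonal_iff.symm⟩

theorem IsFaithfulOrthVecRep.map {G : SimpleGraph V} {x : V → E} (hx : IsFaithfulOrthVecRep G x)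
    (f : E →ₗᵢ[ℂ] F) : IsFaithfulOrthVecRep G (f ∘ x) where
  ne_zero v := by simpa [map_eq_zero_iff f f.injective] using hx.ne_zero v
  span_injective u v h := by
    refine hx.span_injective (Submodule.map_injective_of_injective f.injective ?_)
    simpa [Submodule.map_span] using h
  adj_iff u v huv := by simpa using hx.adj_iff u v huv

theorem IsFaithfulOrthVecRep.sum_elim {V₁ V₂ : Type*} {G₁ : SimpleGraph V₁}
    {G₂ : SimpleGraph V₂} {x : V₁ → E} {y : V₂ → E} (hx : IsFaithfulOrthVecRep G₁ x)
    (hy : IsFaithfulOrthVecRep G₂ y) (hinner : ∀ u w, ⟪x u, y w⟫_ℂ ≠ 0)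
    (hspan : ∀ u w, (ℂ ∙ x u) ≠ ℂ ∙ y w) :
    IsFaithfulOrthVecRep (G₁ ⊕g G₂) (Sum.elim x y) where
  ne_zero := by
    rintro (u | w)
    exacts [hx.ne_zero u, hy.ne_zero w]
  span_injective := by
    rintro (u | w) (u' | w') h <;> simp only [Sum.elim_inl, Sum.elim_inr] at h
    · exact congrArg Sum.inl (hx.span_injective h)
    · exact (hspan u w' h).elim
    · exact (hspan u' w h.symm).elim
    · exact congrArg Sum.inr (hy.span_injective h)
  adj_iff := by
    rintro (u | w) (u' | w') huv
    · simpa using hx.adj_iff u u' (by simpa using huv)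
    · simpa using hinner u w'
    · simpa [inner_eq_zero_symm] using hinner u' w
    · simpa using hy.adj_iff w w' (by simpa using huv)

/-- Vertex `v` is sent to the indicator vector of the non-edges at `v`, loop `s(v, v)` included. -/
theorem exists_isFaithfulOrthVecRep [Fintype V] (G : SimpleGraph V) :
    ∃ x : V → EuclideanSpace ℂ (Sym2 V), IsFaithfulOrthVecRep G x := by
  classical
  let S : V → Finset (Sym2 V) := fun v => {s | v ∈ s ∧ s ∉ G.edgeSet}
  have hloop : ∀ u v, s(u, u) ∈ S v ↔ v = u := by simp [S]
  have hdisj : ∀ u v, u ≠ v → (G.Adj u v ↔ Disjoint (S u) (S v)) := by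
    intro u v huv
    simp only [Finset.disjoint_left, S, Finset.mem_filter, Finset.mem_univ, true_and]
    constructor
    · rintro hadj s ⟨hu, hs⟩ ⟨hv, -⟩
      exact hs ((Sym2.mem_and_mem_iff huv).mp ⟨hu, hv⟩ ▸ hadj)
    · intro h
      by_contra hadj
      exact h ⟨Sym2.mem_mk_left u v, hadj⟩ ⟨Sym2.mem_mk_right u v, hadj⟩
  let x : V → EuclideanSpace ℂ (Sym2 V) :=
    fun v => WithLp.toLp 2 fun s => if s ∈ S v then 1 else 0
  have hx : ∀ u v, x v s(u, u) = if v = u then 1 else 0 := fun u v => by simp [x, hloop]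
  refine ⟨x, fun v h => by simpa [hx] using congrArg (· s(v, v)) h, fun u v h => ?_, ?_⟩
  · obtain ⟨c, hc⟩ := Submodule.span_singleton_eq_span_singleton.mp h
    by_contra huv
    simpa [hx, Ne.symm huv, Units.smul_def] using congrArg (· s(u, u)) hc
  · intro u v huv
    rw [hdisj u v huv, inner_toLp_indicator, Nat.cast_eq_zero, Finset.card_eq_zero,
      Finset.disjoint_iff_inter_eq_empty]

end VecRep

section HasFOR

variable {V : Type*}

theorem HasFOR.mono {G : SimpleGraph V} {d d' : ℕ} (h : HasFOR G d) (hd : d ≤ d') :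
    HasFOR G d' := by
  obtain ⟨x, hx⟩ := hasFOR_iff_exists_isFaithfulOrthVecRep.mp h
  obtain ⟨f⟩ := exists_linearIsometry_of_finrank_le (𝕜 := ℂ)
    (E := EuclideanSpace ℂ (Fin d)) (F := EuclideanSpace ℂ (Fin d')) (by simpa using hd)
  exact hasFOR_iff_exists_isFaithfulOrthVecRep.mpr ⟨_, hx.map f⟩

theorem exists_hasFOR [Finite V] (G : SimpleGraph V) : ∃ d, HasFOR G d := by
  have := Fintype.ofFinite V
  obtain ⟨x, hx⟩ := exists_isFaithfulOrthVecRep G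
  obtain ⟨f⟩ := exists_linearIsometry_of_finrank_le (𝕜 := ℂ)
    (E := EuclideanSpace ℂ (Sym2 V)) (F := EuclideanSpace ℂ (Fin (Fintype.card (Sym2 V))))
    (by simp)
  exact ⟨_, hasFOR_iff_exists_isFaithfulOrthVecRep.mpr ⟨_, hx.map f⟩⟩

theorem hasFOR_Xi [Finite V] (G : SimpleGraph V) : HasFOR G (Xi G) :=
  Nat.sInf_mem (exists_hasFOR G)

theorem HasFOR.comap {W : Type*} {G : SimpleGraph V} {H : SimpleGraph W} {d : ℕ}
    (h : HasFOR G d) (f : H ↪g G) : HasFOR H d := by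
  obtain ⟨φ, hinj, hrank, hadj⟩ := h
  exact ⟨φ ∘ f, hinj.comp f.injective, fun v => hrank (f v),
    fun u v huv => f.map_adj_iff.symm.trans (hadj _ _ (f.injective.ne huv))⟩

/-- In dimension `≤ 1` the whole space is the only line. -/
theorem HasFOR.two_le [Nontrivial V] {G : SimpleGraph V} {d : ℕ} (h : HasFOR G d) : 2 ≤ d := by
  obtain ⟨φ, hinj, hrank, -⟩ := h
  by_contra! hd
  have hE : finrank ℂ (EuclideanSpace ℂ (Fin d)) ≤ 1 := by simpa using Nat.lt_succ_iff.mp hd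
  have htop : ∀ v, φ v = ⊤ := fun v =>
    Submodule.eq_top_of_finrank_eq ((Submodule.finrank_le _).antisymm (hE.trans (hrank v).ge))
  obtain ⟨u, v, huv⟩ := exists_pair_ne V
  exact huv (hinj ((htop u).trans (htop v).symm))

theorem HasFOR.sum {V₁ V₂ : Type*} [Finite V₁] [Finite V₂] {G₁ : SimpleGraph V₁}
    {G₂ : SimpleGraph V₂} {d : ℕ} (hd : 2 ≤ d) (h₁ : HasFOR G₁ d) (h₂ : HasFOR G₂ d) :
    HasFOR (G₁ ⊕g G₂) d := by
  obtain ⟨x, hx⟩ := hasFOR_iff_exists_isFaithfulOrthVecRep.mp h₁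
  obtain ⟨y, hy⟩ := hasFOR_iff_exists_isFaithfulOrthVecRep.mp h₂
  have hd' : 2 ≤ finrank ℂ (EuclideanSpace ℂ (Fin d)) := by simpa using hd
  choose z hz0 hzx using fun u => exists_ne_zero_inner_eq_zero hd' (x u)
  obtain ⟨U, hU⟩ := exists_linearIsometry_forall_inner_ne_zero (a := Sum.elim x z)
    (by rintro (u | u); exacts [hx.ne_zero u, hz0 u]) hy.ne_zero
  refine hasFOR_iff_exists_isFaithfulOrthVecRep.mpr
    ⟨_, hx.sum_elim (hy.map U) (fun u w => hU (.inl u) w) fun u w hspan => ?_⟩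
  obtain ⟨c, hc⟩ := Submodule.span_singleton_eq_span_singleton.mp hspan
  have hUy : U (y w) = (c : ℂ) • x u := hc.symm
  apply hU (.inr u) w
  rw [Sum.elim_inr, hUy, inner_smul_right, hzx, mul_zero]

end HasFOR

theorem stmt6_general {V₁ V₂ : Type*} [Fintype V₁] [Fintype V₂]
    (G₁ : SimpleGraph V₁) (G₂ : SimpleGraph V₂)
    (h : 1 < Fintype.card V₁ ∨ 1 < Fintype.card V₂) :
    Xi (G₁ ⊕g G₂) = max (Xi G₁) (Xi G₂) := by
  have hmax : 2 ≤ max (Xi G₁) (Xi G₂) := by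
    rcases h with h | h <;> rw [Fintype.one_lt_card_iff_nontrivial] at h
    · exact (hasFOR_Xi G₁).two_le.trans (le_max_left _ _)
    · exact (hasFOR_Xi G₂).two_le.trans (le_max_right _ _)
  refine le_antisymm (Nat.sInf_le ?_) (max_le (Nat.sInf_le ?_) (Nat.sInf_le ?_))
  · exact .sum hmax ((hasFOR_Xi G₁).mono (le_max_left _ _))
      ((hasFOR_Xi G₂).mono (le_max_right _ _))
  · exact (hasFOR_Xi _).comap SimpleGraph.Embedding.sumInl
  · exact (hasFOR_Xi _).comap SimpleGraph.Embedding.sumInr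

/-- For finite nonempty simple graphs `G₁` and `G₂`, at least one of which has
more than one vertex, `Ξ(G₁ ∪ G₂) = max (Ξ(G₁), Ξ(G₂))`. -/
theorem stmt6 {V₁ V₂ : Type*} [Fintype V₁] [Fintype V₂] [Nonempty V₁] [Nonempty V₂]
    (G₁ : SimpleGraph V₁) (G₂ : SimpleGraph V₂)
    (h : 1 < Fintype.card V₁ ∨ 1 < Fintype.card V₂) :
    Xi (G₁ ⊕g G₂) = max (Xi G₁) (Xi G₂) :=
  stmt6_general G₁ G₂ h
end

section
/- For finite nonempty simple graphs G₁ and G₂, the smallest dimension admitting an orthogonal representation of their join satisfies ξ(G₁ + G₂) = ξ(G₁) + ξ(G₂). -/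
open Module

/-!
Given an orthogonal representation of `G₁ + G₂` in `ℂ^d`, the span `W` of the lines of the
vertices of `G₂` is orthogonal to the line of every vertex of `G₁`, so `G₂` is represented in `W`
and `G₁` in `Wᗮ`, whose dimensions add up to `d`. Conversely, representations of `G₁` in `ℂ^a`
and of `G₂` in `ℂ^b` are placed in the two orthogonal summands of `ℂ^a ⊕ ℂ^b`.
-/

open Submodule

namespace WithLp

variable {E F : Type*} [NormedAddCommGroup E] [InnerProductSpace ℂ E]
  [NormedAddCommGroup F] [InnerProductSpace ℂ F]

noncomputable def inlₗᵢ : E →ₗᵢ[ℂ] WithLp 2 (E × F) :=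
  LinearMap.isometryOfInner
    ((WithLp.linearEquiv 2 ℂ (E × F)).symm.toLinearMap ∘ₗ LinearMap.inl ℂ E F) (by simp)

noncomputable def inrₗᵢ : F →ₗᵢ[ℂ] WithLp 2 (E × F) :=
  LinearMap.isometryOfInner
    ((WithLp.linearEquiv 2 ℂ (E × F)).symm.toLinearMap ∘ₗ LinearMap.inr ℂ E F) (by simp)

theorem isOrtho_map_inlₗᵢ_map_inrₗᵢ (p : Submodule ℂ E) (q : Submodule ℂ F) :
    p.map (inlₗᵢ (F := F)).toLinearMap ⟂ q.map (inrₗᵢ (E := E)).toLinearMap := by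
  rw [isOrtho_iff_inner_eq]
  rintro _ ⟨x, -, rfl⟩ _ ⟨y, -, rfl⟩
  simp [inlₗᵢ, inrₗᵢ]

end WithLp

section graphJoin

variable {V₁ V₂ : Type*} (G₁ : SimpleGraph V₁) (G₂ : SimpleGraph V₂)

def graphJoin.inl : G₁ ↪g graphJoin G₁ G₂ where
  toEmbedding := .inl
  map_rel_iff' := by simp [graphJoin]

def graphJoin.inr : G₂ ↪g graphJoin G₁ G₂ where
  toEmbedding := .inr
  map_rel_iff' := by simp [graphJoin]

end graphJoin

theorem Submodule.ne_of_isOrtho {E : Type*} [NormedAddCommGroup E] [InnerProductSpace ℂ E]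
    {p q : Submodule ℂ E} (h : p ⟂ q) (hp : finrank ℂ p = 1) : p ≠ q := by
  rintro rfl
  rw [disjoint_self.mp h.disjoint, finrank_bot] at hp
  exact zero_ne_one hp

section OrthRep

variable {V E F : Type*} [NormedAddCommGroup E] [InnerProductSpace ℂ E]
  [NormedAddCommGroup F] [InnerProductSpace ℂ F]

/-- For `E = ℂ^d` this is definitionally `IsOrthRep G d`, since `p ⟂ q` unfolds to `p ≤ qᗮ`. -/
def IsOrthRepIn (G : SimpleGraph V) (φ : V → Submodule ℂ E) : Prop :=
  Function.Injective φ ∧ (∀ v, finrank ℂ (φ v) = 1) ∧ ∀ u v, G.Adj u v → φ u ⟂ φ v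

namespace IsOrthRepIn

variable {G : SimpleGraph V} {φ : V → Submodule ℂ E}

theorem map (f : E →ₗᵢ[ℂ] F) (h : IsOrthRepIn G φ) :
    IsOrthRepIn G fun v => (φ v).map f.toLinearMap :=
  ⟨(map_injective_of_injective f.injective).comp h.1,
    fun v => (equivMapOfInjective _ f.injective (φ v)).finrank_eq.symm.trans (h.2.1 v),
    fun u v huv => (h.2.2 u v huv).map f⟩

theorem comap (f : E →ₗᵢ[ℂ] F) {φ : V → Submodule ℂ F}
    (hφ : ∀ v, φ v ≤ LinearMap.range f.toLinearMap) (h : IsOrthRepIn G φ) :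
    IsOrthRepIn G fun v => (φ v).comap f.toLinearMap := by
  have hmap v : ((φ v).comap f.toLinearMap).map f.toLinearMap = φ v := map_comap_eq_self (hφ v)
  refine ⟨fun u v huv => h.1 ?_, fun v => ?_, fun u v huv => (h.2.2 u v huv).comap f⟩
  · simp only at huv
    rw [← hmap u, ← hmap v, huv]
  · rw [(equivMapOfInjective _ f.injective _).finrank_eq, hmap, h.2.1 v]

theorem comp {W : Type*} {H : SimpleGraph W} (h : IsOrthRepIn G φ) (f : H ↪g G) :
    IsOrthRepIn H (φ ∘ f) :=
  ⟨h.1.comp f.injective, fun v => h.2.1 (f v), fun _ _ huv => h.2.2 _ _ (f.map_rel_iff.mpr huv)⟩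

theorem span_orthonormal {b : V → E} (hb : Orthonormal ℂ b) :
    IsOrthRepIn G fun v => ℂ ∙ b v := by
  have hline v : finrank ℂ (ℂ ∙ b v) = 1 := finrank_span_singleton (hb.ne_zero v)
  have hortho : ∀ {u v}, u ≠ v → (ℂ ∙ b u) ⟂ (ℂ ∙ b v) :=
    fun huv => isOrtho_span.mpr (by simp [hb.inner_eq_zero huv])
  refine ⟨fun u v huv => ?_, hline, fun _ _ huv => hortho (G.ne_of_adj huv)⟩
  by_contra hne
  exact ne_of_isOrtho (hortho hne) (hline u) huv

theorem sumElim {V₁ V₂ : Type*} {G₁ : SimpleGraph V₁} {G₂ : SimpleGraph V₂}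
    {φ₁ : V₁ → Submodule ℂ E} {φ₂ : V₂ → Submodule ℂ E} (h₁ : IsOrthRepIn G₁ φ₁)
    (h₂ : IsOrthRepIn G₂ φ₂) (h : ∀ u v, φ₁ u ⟂ φ₂ v) :
    IsOrthRepIn (graphJoin G₁ G₂) (Sum.elim φ₁ φ₂) := by
  refine ⟨?_, Sum.forall.mpr ⟨h₁.2.1, h₂.2.1⟩, ?_⟩
  · rintro (u | u) (v | v) huv <;> simp only [Sum.elim_inl, Sum.elim_inr] at huv
    · exact congrArg _ (h₁.1 huv)
    · exact absurd huv (ne_of_isOrtho (h u v) (h₁.2.1 u))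
    · exact absurd huv.symm (ne_of_isOrtho (h v u) (h₁.2.1 v))
    · exact congrArg _ (h₂.1 huv)
  · rintro (u | u) (v | v) huv <;> simp only [graphJoin, SimpleGraph.sup_adj,
      SimpleGraph.sum_adj, completeBipartiteGraph_adj, Sum.elim_inl, Sum.elim_inr] at huv ⊢
    · exact h₁.2.2 u v (by simpa using huv)
    · exact h u v
    · exact (h v u).symm
    · exact h₂.2.2 u v (by simpa using huv)

end IsOrthRepIn

theorem hasOR_finrank_iff (G : SimpleGraph V) [FiniteDimensional ℂ E] :
    HasOR G (finrank ℂ E) ↔ ∃ φ : V → Submodule ℂ E, IsOrthRepIn G φ := by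
  let e := (stdOrthonormalBasis ℂ E).repr
  constructor
  · rintro ⟨φ, hφ⟩
    exact ⟨_, IsOrthRepIn.map e.symm.toLinearIsometry hφ⟩
  · rintro ⟨φ, hφ⟩
    exact ⟨_, IsOrthRepIn.map e.toLinearIsometry hφ⟩

theorem hasOR_finrank_of_le [FiniteDimensional ℂ E] {G : SimpleGraph V}
    {φ : V → Submodule ℂ E} (h : IsOrthRepIn G φ) (U : Submodule ℂ E) (hU : ∀ v, φ v ≤ U) :
    HasOR G (finrank ℂ U) :=
  (hasOR_finrank_iff G).2 ⟨_, h.comap U.subtypeₗᵢ (by simpa using hU)⟩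

theorem hasOR_card [Fintype V] (G : SimpleGraph V) : HasOR G (Fintype.card V) := by
  rw [← finrank_euclideanSpace (𝕜 := ℂ), hasOR_finrank_iff]
  exact ⟨_, .span_orthonormal (EuclideanSpace.basisFun V ℂ).orthonormal⟩

theorem HasOR.join {V₁ V₂ : Type*} {G₁ : SimpleGraph V₁} {G₂ : SimpleGraph V₂} {d₁ d₂ : ℕ}
    (h₁ : HasOR G₁ d₁) (h₂ : HasOR G₂ d₂) : HasOR (graphJoin G₁ G₂) (d₁ + d₂) := by
  obtain ⟨φ₁, hφ₁ : IsOrthRepIn G₁ φ₁⟩ := h₁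
  obtain ⟨φ₂, hφ₂ : IsOrthRepIn G₂ φ₂⟩ := h₂
  have hdim : finrank ℂ (WithLp 2 (EuclideanSpace ℂ (Fin d₁) × EuclideanSpace ℂ (Fin d₂))) =
      d₁ + d₂ := by
    simp [(WithLp.linearEquiv 2 ℂ _).finrank_eq]
  rw [← hdim, hasOR_finrank_iff]
  exact ⟨_, (hφ₁.map WithLp.inlₗᵢ).sumElim (hφ₂.map WithLp.inrₗᵢ)
    fun u v => WithLp.isOrtho_map_inlₗᵢ_map_inrₗᵢ (φ₁ u) (φ₂ v)⟩

theorem HasOR.exists_add_of_join {V₁ V₂ : Type*} {G₁ : SimpleGraph V₁}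
    {G₂ : SimpleGraph V₂} {d : ℕ} (h : HasOR (graphJoin G₁ G₂) d) :
    ∃ d₁ d₂, HasOR G₁ d₁ ∧ HasOR G₂ d₂ ∧ d₁ + d₂ = d := by
  obtain ⟨Φ, hΦ : IsOrthRepIn (graphJoin G₁ G₂) Φ⟩ := h
  let W := ⨆ v, Φ (.inr v)
  have hW : ∀ u, Φ (.inl u) ≤ Wᗮ := fun u =>
    isOrtho_iff_le.mp (isOrtho_iSup_right.mpr fun v => hΦ.2.2 _ _ (by simp [graphJoin]))
  refine ⟨finrank ℂ Wᗮ, finrank ℂ W, ?_, ?_, ?_⟩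
  · exact hasOR_finrank_of_le (hΦ.comp (graphJoin.inl G₁ G₂)) Wᗮ hW
  · exact hasOR_finrank_of_le (hΦ.comp (graphJoin.inr G₁ G₂)) W fun v => le_iSup_of_le v le_rfl
  · rw [add_comm, finrank_add_finrank_orthogonal, finrank_euclideanSpace_fin]

theorem hasOR_xi [Fintype V] (G : SimpleGraph V) : HasOR G (xi G) :=
  Nat.sInf_mem (s := {d | HasOR G d}) ⟨_, hasOR_card G⟩

theorem xi_le {G : SimpleGraph V} {d : ℕ} (h : HasOR G d) : xi G ≤ d :=
  Nat.sInf_le h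

end OrthRep

theorem stmt10_general {V₁ V₂ : Type*} [Fintype V₁] [Fintype V₂]
    (G₁ : SimpleGraph V₁) (G₂ : SimpleGraph V₂) :
    xi (graphJoin G₁ G₂) = xi G₁ + xi G₂ := by
  have hjoin := (hasOR_xi G₁).join (hasOR_xi G₂)
  refine le_antisymm (xi_le hjoin) (le_csInf ⟨_, hjoin⟩ fun d hd => ?_)
  obtain ⟨d₁, d₂, h₁, h₂, rfl⟩ := HasOR.exists_add_of_join hd
  exact add_le_add (xi_le h₁) (xi_le h₂)

/-- For finite nonempty simple graphs `G₁` and `G₂`,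
`ξ(G₁ + G₂) = ξ(G₁) + ξ(G₂)`. -/
theorem stmt10 {V₁ V₂ : Type*} [Fintype V₁] [Fintype V₂] [Nonempty V₁] [Nonempty V₂]
    (G₁ : SimpleGraph V₁) (G₂ : SimpleGraph V₂) :
    xi (graphJoin G₁ G₂) = xi G₁ + xi G₂ :=
  stmt10_general G₁ G₂
end

section
/- For all natural numbers n and m with n + m ≥ 1, the graph n·K̄₂ + m·K₁ (the join of n copies of the two-vertex edgeless graph and m copies of the one-vertex graph) satisfies ξ(n·K̄₂ + m·K₁) = 2n + m. -/
open Module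

/-- The join `n·K̄₂ + m·K₁` of `n` copies of the two-vertex edgeless graph `K̄₂` and `m` copies
of the one-vertex graph `K₁`: the complete multipartite graph whose parts are the `n` copies of
`K̄₂` (the fibers `{(i, 0), (i, 1)}`) and the `m` singletons. Two vertices are adjacent if and
only if they lie in different parts. -/
def multiJoin (n m : ℕ) : SimpleGraph ((Fin n × Fin 2) ⊕ Fin m) :=
  (⊤ : SimpleGraph (Fin n ⊕ Fin m)).comap (Sum.map Prod.fst id)

/-!
Coordinate lines give an orthogonal representation in dimension `2n + m`, the number of vertices.
Conversely, in any orthogonal representation the spans of the `n + m` parts are pairwise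
orthogonal, hence their dimensions add up to at most `d`; the two vertices of a copy of `K̄₂` are
sent to distinct lines, which span a plane, and a singleton part spans a line.
-/

open Function

theorem iSupIndep.sum_finrank_le {K V ι : Type*} [Field K] [AddCommGroup V] [Module K V]
    [FiniteDimensional K V] [Fintype ι] {W : ι → Submodule K V}
    (hW : iSupIndep W) : ∑ i, finrank K (W i) ≤ finrank K V := by
  classical
  rw [← Module.finrank_directSum]
  exact LinearMap.finrank_le_finrank_of_injective hW.dfinsupp_lsum_injective

theorem Submodule.finrank_sup_eq_two {K V : Type*} [Field K] [AddCommGroup V] [Module K V]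
    [FiniteDimensional K V] {A B : Submodule K V} (hA : finrank K A = 1) (hB : finrank K B = 1)
    (hAB : A ≠ B) : finrank K ↥(A ⊔ B) = 2 := by
  have hinf : finrank K ↥(A ⊓ B) = 0 := by
    have hle := Submodule.finrank_mono (inf_le_left : A ⊓ B ≤ A)
    by_contra h0
    have hA' := Submodule.eq_of_le_of_finrank_eq (inf_le_left : A ⊓ B ≤ A) (by omega)
    have hB' := Submodule.eq_of_le_of_finrank_eq (inf_le_right : A ⊓ B ≤ B) (by omega)
    exact hAB (hA'.symm.trans hB')
  have := Submodule.finrank_sup_add_finrank_inf_eq A B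
  omega

section InnerProductSpace

variable {𝕜 E ι : Type*} [RCLike 𝕜] [NormedAddCommGroup E] [InnerProductSpace 𝕜 E]

theorem Submodule.sum_finrank_le_of_pairwise_isOrtho [FiniteDimensional 𝕜 E] [Fintype ι]
    {W : ι → Submodule 𝕜 E} (hW : Pairwise (Submodule.IsOrtho on W)) :
    ∑ i, finrank 𝕜 (W i) ≤ finrank 𝕜 E :=
  (OrthogonalFamily.of_pairwise hW).independent.sum_finrank_le

theorem Orthonormal.pairwise_isOrtho_span_singleton {v : ι → E} (hv : Orthonormal 𝕜 v) :
    Pairwise (Submodule.IsOrtho on fun i => 𝕜 ∙ v i) := fun i j hij =>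
  Submodule.isOrtho_span.mpr fun x hx y hy => by
    rw [Set.mem_singleton_iff.mp hx, Set.mem_singleton_iff.mp hy]
    exact hv.2 hij

theorem Orthonormal.injective_span_singleton {v : ι → E} (hv : Orthonormal 𝕜 v) :
    Injective fun i => 𝕜 ∙ v i := by
  intro i j hij
  by_contra hne
  have hself : (𝕜 ∙ v i) ⟂ (𝕜 ∙ v j) := hv.pairwise_isOrtho_span_singleton hne
  rw [show (𝕜 ∙ v j) = 𝕜 ∙ v i from hij.symm, Submodule.isOrtho_self,
    Submodule.span_singleton_eq_bot] at hself
  exact hv.ne_zero i hself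

end InnerProductSpace

section OrthRep

variable {V : Type*} {G : SimpleGraph V} {d : ℕ}

theorem isOrthRep_span_singleton_of_orthonormal {v : V → EuclideanSpace ℂ (Fin d)}
    (hv : Orthonormal ℂ v) : IsOrthRep G d fun x => ℂ ∙ v x :=
  ⟨hv.injective_span_singleton, fun x => finrank_span_singleton (hv.ne_zero x),
    fun _ _ hxy => hv.pairwise_isOrtho_span_singleton (G.ne_of_adj hxy)⟩

theorem hasOR_of_card_le [Fintype V] (h : Fintype.card V ≤ d) : HasOR G d := by
  obtain ⟨f⟩ := Function.Embedding.nonempty_of_card_le (h.trans_eq (Fintype.card_fin d).symm)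
  exact ⟨_, isOrthRep_span_singleton_of_orthonormal
    ((EuclideanSpace.basisFun (Fin d) ℂ).orthonormal.comp f f.injective)⟩

theorem IsOrthRep.pairwise_isOrtho_iSup_fiber {ι : Type*} {φ} (hφ : IsOrthRep G d φ)
    (p : V → ι) (hp : ∀ u v, p u ≠ p v → G.Adj u v) :
    Pairwise (Submodule.IsOrtho on fun i => ⨆ v ∈ p ⁻¹' {i}, φ v) := by
  intro i j hij
  simp only [onFun, Submodule.isOrtho_iSup_left, Submodule.isOrtho_iSup_right]
  intro v hv u hu
  exact hφ.2.2 u v (hp u v fun h => hij (hu.symm.trans (h.trans hv)))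

theorem IsOrthRep.sum_finrank_iSup_fiber_le {ι : Type*} [Fintype ι] {φ}
    (hφ : IsOrthRep G d φ) (p : V → ι) (hp : ∀ u v, p u ≠ p v → G.Adj u v) :
    ∑ i, finrank ℂ ↥(⨆ v ∈ p ⁻¹' {i}, φ v) ≤ d := by
  simpa only [finrank_euclideanSpace_fin] using
    Submodule.sum_finrank_le_of_pairwise_isOrtho (hφ.pairwise_isOrtho_iSup_fiber p hp)

end OrthRep

theorem IsOrthRep.two_mul_add_le_of_multiJoin {n m d : ℕ} {φ}
    (hφ : IsOrthRep (multiJoin n m) d φ) : 2 * n + m ≤ d := by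
  have hparts := hφ.sum_finrank_iSup_fiber_le (Sum.map Prod.fst id) fun _ _ h => h
  have hplane (i : Fin n) :
      finrank ℂ ↥(⨆ v ∈ Sum.map Prod.fst id ⁻¹' {Sum.inl i}, φ v) = 2 := by
    have hfiber : Sum.map Prod.fst id ⁻¹' {Sum.inl i} =
        ({Sum.inl (i, 0), Sum.inl (i, 1)} : Set ((Fin n × Fin 2) ⊕ Fin m)) := by
      refine Set.ext ?_
      rintro (⟨j, b⟩ | k)
      · fin_cases b <;> simp [eq_comm]
      · simp
    rw [hfiber, iSup_pair]
    exact Submodule.finrank_sup_eq_two (hφ.2.1 _) (hφ.2.1 _) (hφ.1.ne (by simp))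
  have hline (k : Fin m) :
      finrank ℂ ↥(⨆ v ∈ Sum.map Prod.fst id ⁻¹' {Sum.inr k}, φ v) = 1 := by
    have hfiber : Sum.map Prod.fst id ⁻¹' {Sum.inr k} =
        ({Sum.inr k} : Set ((Fin n × Fin 2) ⊕ Fin m)) := by
      refine Set.ext ?_
      rintro (⟨j, b⟩ | l) <;> simp
    rw [hfiber, iSup_singleton]
    exact hφ.2.1 _
  simp only [Fintype.sum_sum_type, hplane, hline, Finset.sum_const, Finset.card_univ,
    Fintype.card_fin, smul_eq_mul] at hparts
  omega

theorem stmt11_general (n m : ℕ) : xi (multiJoin n m) = 2 * n + m := by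
  have hub : HasOR (multiJoin n m) (2 * n + m) := hasOR_of_card_le (by simp [mul_comm])
  exact le_antisymm (Nat.sInf_le hub)
    (le_csInf ⟨_, hub⟩ fun _ ⟨_, hφ⟩ => hφ.two_mul_add_le_of_multiJoin)

/-- For all natural numbers `n` and `m` with `n + m ≥ 1`,
`ξ(n·K̄₂ + m·K₁) = 2n + m`. -/
theorem stmt11 (n m : ℕ) (h : 1 ≤ n + m) : xi (multiJoin n m) = 2 * n + m :=
  stmt11_general n m
end

section
/- The graph Ci₁₁(1,2,3)∖{v}, obtained from the circulant graph on 11 vertices in which each vertex is adjacent to its first, second, and third neighbors in both directions by deleting one vertex, admits no faithful orthogonal representation in ℂ⁵. -/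
open Module

/-!
Write `u k` for a unit vector spanning the line of the vertex `v + k`, `k = 1, …, 10`. The clique
`{4, 5, 6, 7}` and a unit vector `ℓ` orthogonal to it form an orthonormal basis of `ℂ⁵`, in which
adjacency kills most coordinates of the other six vectors. If two vectors orthogonal to `w` can
both be nonzero only in two coordinates where `w` has entries `(m, s)`, then the products of their
coordinates in these two positions differ by the positive factor `‖m‖² / ‖s‖²`. Eliminating in
this way through `u 3`, `u 8`, `u 9` and `u 2` turns the orthogonality of `u 1` and `u 10` into
`conj ⟪ℓ, u 1⟫ * ⟪ℓ, u 10⟫ * c = 0` with `c > 0`, while the non-edges `1 8` and `3 10` force both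
of these `ℓ`-coordinates to be nonzero.
-/

open SimpleGraph ComplexConjugate
open scoped InnerProductSpace

section InnerProductSpace

variable {𝕜 E : Type*} [RCLike 𝕜] [NormedAddCommGroup E] [InnerProductSpace 𝕜 E]

lemma exists_norm_eq_one_span_eq_of_finrank_eq_one {S : Submodule 𝕜 E} (hS : finrank 𝕜 S = 1) :
    ∃ u : E, ‖u‖ = 1 ∧ S = 𝕜 ∙ u := by
  obtain ⟨w, hwS, hw⟩ := Submodule.exists_mem_ne_zero_of_ne_bot (p := S) (by
    rintro rfl
    simp at hS)
  refine ⟨((‖w‖ : 𝕜)⁻¹) • w, norm_smul_inv_norm hw, ?_⟩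
  exact eq_span_singleton_of_mem_of_finrank_eq_one hS (S.smul_mem _ hwS)
    (smul_ne_zero (by simpa using hw) hw)

theorem Orthonormal.exists_orthonormalBasis_succ_eq {n : ℕ} (hE : finrank 𝕜 E = n + 1)
    {v : Fin n → E} (hv : Orthonormal 𝕜 v) :
    ∃ b : OrthonormalBasis (Fin (n + 1)) 𝕜 E, ∀ i, b i.succ = v i := by
  have : FiniteDimensional 𝕜 E := Module.finite_of_finrank_pos (by omega)
  have hrestrict : ({0}ᶜ : Set (Fin (n + 1))).domRestrict (Fin.cons 0 v : Fin (n + 1) → E) =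
      v ∘ fun j : ({0}ᶜ : Set (Fin (n + 1))) => (j : Fin (n + 1)).pred j.2 := by
    funext ⟨j, hj⟩
    obtain ⟨i, rfl⟩ := Fin.exists_succ_eq.mpr hj
    exact congrArg v (Fin.pred_succ i).symm
  obtain ⟨b, hb⟩ := Orthonormal.exists_orthonormalBasis_extension_of_card_eq
    (by simpa using hE) (hrestrict ▸ hv.comp _ fun j k h => Subtype.ext (Fin.pred_inj.mp h))
  exact ⟨b, fun i => by simpa using hb i.succ (Fin.succ_ne_zero i)⟩

theorem Orthonormal.exists_inner_eq_add_sum {n : ℕ} (hE : finrank 𝕜 E = n + 1)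
    {v : Fin n → E} (hv : Orthonormal 𝕜 v) :
    ∃ ℓ : E, ∀ x y, ⟪x, y⟫_𝕜 = conj ⟪ℓ, x⟫_𝕜 * ⟪ℓ, y⟫_𝕜 + ∑ i, conj ⟪v i, x⟫_𝕜 * ⟪v i, y⟫_𝕜 := by
  obtain ⟨b, hb⟩ := hv.exists_orthonormalBasis_succ_eq hE
  exact ⟨b 0, fun x y => by simp [← b.sum_inner_mul_inner x y, Fin.sum_univ_succ, hb]⟩

end InnerProductSpace

theorem IsFaithfulOrthRep.exists_unit_vectors {V : Type*} {G : SimpleGraph V} {d : ℕ}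
    {φ : V → Submodule ℂ (EuclideanSpace ℂ (Fin d))} (hφ : IsFaithfulOrthRep G d φ) :
    ∃ u : V → EuclideanSpace ℂ (Fin d), (∀ i, ‖u i‖ = 1) ∧
      ∀ i j, i ≠ j → (G.Adj i j ↔ ⟪u i, u j⟫_ℂ = 0) := by
  choose u hu hφu using fun i => exists_norm_eq_one_span_eq_of_finrank_eq_one (hφ.2.1 i)
  refine ⟨u, hu, fun i j hij => ?_⟩
  rw [hφ.2.2 i j hij, hφu i, hφu j, Submodule.span_singleton_le_iff_mem,
    Submodule.mem_orthogonal_singleton_iff_inner_left]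

/-- In `ℂ²`, `(conj a, conj x)` and `(b, y)` are both orthogonal to `(m, s)`, hence proportional. -/
lemma mul_mul_norm_sq_eq_of_orthogonal {a b m s x y : ℂ} (h₁ : a * m + x * s = 0)
    (h₂ : conj m * b + conj s * y = 0) : x * y * (‖s‖ : ℂ) ^ 2 = a * b * (‖m‖ : ℂ) ^ 2 := by
  rw [← Complex.mul_conj', ← Complex.mul_conj']
  linear_combination (conj s * y) * h₁ - (a * m) * h₂

local notation "Ci₁₁" => circulantGraph ({1, 2, 3} : Set (ZMod 11))

/-- `x, y, z, p, q, r` are the coordinates of `u 1, u 2, u 3, u 8, u 9, u 10` in the orthonormal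
basis `(ℓ, u 4, u 5, u 6, u 7)`, without those that adjacency forces to vanish. The equations are
the edges `1 3, 3 2, 1 2, 9 8, 8 10, 9 10, 1 9, 2 10, 1 10`. -/
theorem ci11_coordinates_false {x₀ x₅ x₆ x₇ y₀ y₆ y₇ z₀ z₇ p₀ p₄ q₀ q₄ q₅ r₀ r₄ r₅ r₆ : ℂ}
    (hxz : conj x₀ * z₀ + conj x₇ * z₇ = 0) (hzy : conj z₀ * y₀ + conj z₇ * y₇ = 0)
    (hxy : conj x₀ * y₀ + conj x₆ * y₆ + conj x₇ * y₇ = 0)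
    (hqp : conj q₀ * p₀ + conj q₄ * p₄ = 0) (hpr : conj p₀ * r₀ + conj p₄ * r₄ = 0)
    (hqr : conj q₀ * r₀ + conj q₄ * r₄ + conj q₅ * r₅ = 0)
    (hxq : conj x₀ * q₀ + conj x₅ * q₅ = 0) (hyr : conj y₀ * r₀ + conj y₆ * r₆ = 0)
    (hxr : conj x₀ * r₀ + conj x₅ * r₅ + conj x₆ * r₆ = 0)
    (hx₀ : x₀ ≠ 0) (hr₀ : r₀ ≠ 0) (hy₆ : y₆ ≠ 0) (hz₇ : z₇ ≠ 0) (hp₄ : p₄ ≠ 0) (hq₅ : q₅ ≠ 0) :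
    False := by
  have hxy' := mul_mul_norm_sq_eq_of_orthogonal hxz hzy
  have hqr' := mul_mul_norm_sq_eq_of_orthogonal hqp hpr
  have hxr₅ := mul_mul_norm_sq_eq_of_orthogonal hxq
    (b := ((‖p₀‖ : ℂ) ^ 2 + (‖p₄‖ : ℂ) ^ 2) * r₀) (y := (‖p₄‖ : ℂ) ^ 2 * r₅)
    (by linear_combination (‖p₄‖ : ℂ) ^ 2 * hqr - hqr')
  have hxr₆ := mul_mul_norm_sq_eq_of_orthogonal (m := y₀) (s := y₆)
    (a := ((‖z₀‖ : ℂ) ^ 2 + (‖z₇‖ : ℂ) ^ 2) * conj x₀) (x := (‖z₇‖ : ℂ) ^ 2 * conj x₆)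
    (by linear_combination (‖z₇‖ : ℂ) ^ 2 * hxy - hxy') hyr
  have key : conj x₀ * r₀ * (((‖p₄‖ * ‖q₅‖ * ‖z₇‖ * ‖y₆‖) ^ 2
      + (‖p₀‖ ^ 2 + ‖p₄‖ ^ 2) * (‖q₀‖ * ‖z₇‖ * ‖y₆‖) ^ 2
      + (‖z₀‖ ^ 2 + ‖z₇‖ ^ 2) * (‖y₀‖ * ‖p₄‖ * ‖q₅‖) ^ 2 : ℝ) : ℂ) = 0 := by
    push_cast
    linear_combination (‖p₄‖ * ‖q₅‖ * ‖z₇‖ * ‖y₆‖ : ℂ) ^ 2 * hxr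
      - (‖z₇‖ * ‖y₆‖ : ℂ) ^ 2 * hxr₅ - (‖p₄‖ * ‖q₅‖ : ℂ) ^ 2 * hxr₆
  refine mul_ne_zero (mul_ne_zero ((map_ne_zero _).2 hx₀) hr₀)
    (Complex.ofReal_ne_zero.2 (ne_of_gt ?_)) key
  positivity

theorem ci11_false_of_orthogonality {E : Type*} [NormedAddCommGroup E] [InnerProductSpace ℂ E]
    (hE : finrank ℂ E = 5) (u : ZMod 11 → E) (hu : ∀ k ≠ 0, ‖u k‖ = 1)
    (hadj : ∀ i j, i ≠ 0 → j ≠ 0 → i ≠ j → ((Ci₁₁).Adj i j ↔ ⟪u i, u j⟫_ℂ = 0)) : False := by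
  have hz : ∀ i j, i ≠ 0 ∧ j ≠ 0 ∧ (Ci₁₁).Adj i j → ⟪u i, u j⟫_ℂ = 0 :=
    fun i j ⟨hi, hj, h⟩ => (hadj i j hi hj h.ne).mp h
  have hnz : ∀ i j, i ≠ 0 ∧ j ≠ 0 ∧ i ≠ j ∧ ¬ (Ci₁₁).Adj i j → ⟪u i, u j⟫_ℂ ≠ 0 :=
    fun i j ⟨hi, hj, hij, h⟩ => mt (hadj i j hi hj hij).mpr h
  have hon : Orthonormal ℂ ![u 4, u 5, u 6, u 7] := by
    rw [orthonormal_iff_ite]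
    intro i j
    fin_cases i <;> fin_cases j <;> simp (disch := decide) [hz, hu, inner_self_eq_norm_sq_to_K]
  obtain ⟨ℓ, expand⟩ := hon.exists_inner_eq_add_sum hE
  simp only [Fin.sum_univ_four, Matrix.cons_val] at expand
  have coords : ∀ i j, i ≠ 0 ∧ j ≠ 0 ∧ (Ci₁₁).Adj i j → conj ⟪ℓ, u i⟫_ℂ * ⟪ℓ, u j⟫_ℂ +
      (conj ⟪u 4, u i⟫_ℂ * ⟪u 4, u j⟫_ℂ + conj ⟪u 5, u i⟫_ℂ * ⟪u 5, u j⟫_ℂ +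
        conj ⟪u 6, u i⟫_ℂ * ⟪u 6, u j⟫_ℂ + conj ⟪u 7, u i⟫_ℂ * ⟪u 7, u j⟫_ℂ) = 0 :=
    fun i j h => (expand _ _).symm.trans (hz i j h)
  refine ci11_coordinates_false (x₀ := ⟪ℓ, u 1⟫_ℂ) (x₅ := ⟪u 5, u 1⟫_ℂ) (x₆ := ⟪u 6, u 1⟫_ℂ)
    (x₇ := ⟪u 7, u 1⟫_ℂ) (y₀ := ⟪ℓ, u 2⟫_ℂ) (y₇ := ⟪u 7, u 2⟫_ℂ) (z₀ := ⟪ℓ, u 3⟫_ℂ)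
    (p₀ := ⟪ℓ, u 8⟫_ℂ) (q₀ := ⟪ℓ, u 9⟫_ℂ) (q₄ := ⟪u 4, u 9⟫_ℂ) (r₀ := ⟪ℓ, u 10⟫_ℂ)
    (r₄ := ⟪u 4, u 10⟫_ℂ) (r₅ := ⟪u 5, u 10⟫_ℂ) (r₆ := ⟪u 6, u 10⟫_ℂ)
    ?_ ?_ ?_ ?_ ?_ ?_ ?_ ?_ ?_ ?_ ?_
    (hnz 6 2 (by decide)) (hnz 7 3 (by decide)) (hnz 4 8 (by decide)) (hnz 5 9 (by decide))
  · simpa (disch := decide) [hz, add_assoc] using coords 1 3 (by decide)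
  · simpa (disch := decide) [hz, add_assoc] using coords 3 2 (by decide)
  · simpa (disch := decide) [hz, add_assoc] using coords 1 2 (by decide)
  · simpa (disch := decide) [hz, add_assoc] using coords 9 8 (by decide)
  · simpa (disch := decide) [hz, add_assoc] using coords 8 10 (by decide)
  · simpa (disch := decide) [hz, add_assoc] using coords 9 10 (by decide)
  · simpa (disch := decide) [hz, add_assoc] using coords 1 9 (by decide)
  · simpa (disch := decide) [hz, add_assoc] using coords 2 10 (by decide)
  · simpa (disch := decide) [hz, add_assoc] using coords 1 10 (by decide)
  · exact fun h => hnz 1 8 (by decide)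
      (by simpa (disch := decide) [h, hz] using expand (u 1) (u 8))
  · exact fun h => hnz 3 10 (by decide)
      (by simpa (disch := decide) [h, hz] using expand (u 3) (u 10))

/-- The graph `Ci₁₁(1,2,3) ∖ {v}`, obtained from the circulant graph on
`ℤ/11ℤ` with connection set `{±1, ±2, ±3}` by deleting one vertex, admits no faithful
orthogonal representation in `ℂ⁵`. -/
theorem stmt15 (v : ZMod 11) :
    ¬ HasFOR ((SimpleGraph.circulantGraph ({1, 2, 3} : Set (ZMod 11))).induce
      {i : ZMod 11 | i ≠ v}) 5 := by
  rintro ⟨φ, hφ⟩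
  obtain ⟨w, hw, hwG⟩ := hφ.exists_unit_vectors
  have hmem : ∀ {k : ZMod 11}, k ≠ 0 → v + k ≠ v := fun hk => by simpa using hk
  refine ci11_false_of_orthogonality finrank_euclideanSpace_fin
    (fun k => if hk : k = 0 then 0 else w ⟨v + k, hmem hk⟩) (fun k hk => by simp [hk, hw])
    (fun i j hi hj hij => ?_)
  simp only [hi, hj, dite_false]
  rw [← hwG _ _ (by simpa using hij), induce_adj]
  simpa only [add_comm v] using circulantGraph_adj_translate.symm
end
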